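/- arXiv:2405.16900 — 2 statements merged into one kernel-verified Lean document; each statement's English description precedes it below -/
import Mathlib

section
/- For any X, Y ∈ St(n,r) and any v ∈ T_X, the polar retraction is non-expansive in the sense that ‖R_X(v) − Y‖_F² ≤ ‖X + v − Y‖_F². -/
open Matrix
open scoped BigOperators

attribute [local instance] Matrix.frobeniusNormedAddCommGroup Matrix.frobeniusNormedSpace

noncomputable section

/-- the Frobenius norm of a real matrix -/
def frob {n r : ℕ} (A : Matrix (Fin n) (Fin r) ℝ) : ℝ :=
  Real.sqrt (∑ i, ∑ j, (A i j) ^ 2)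

/-- the Stiefel manifold St(n,r) -/
def Stiefel (n r : ℕ) : Set (Matrix (Fin n) (Fin r) ℝ) := {X | Xᵀ * X = 1}

/-- the tangent space of St(n,r) at X -/
def Tang {n r : ℕ} (X : Matrix (Fin n) (Fin r) ℝ) : Set (Matrix (Fin n) (Fin r) ℝ) :=
  {u | Xᵀ * u + uᵀ * X = 0}

lemma psd_one_add_sq {n r : ℕ} (v : Matrix (Fin n) (Fin r) ℝ) :
    (1 + vᵀ * v).PosSemidef := by
  have h := (Matrix.PosDef.one (n := Fin r) (R := ℝ)).posSemidef.add
    (Matrix.posSemidef_conjTranspose_mul_self v)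
  simpa using h

/-- the square root of a positive semidefinite matrix (removed from Mathlib; old definition) -/
def Matrix.PosSemidef.sqrt {n : Type*} [Fintype n] [DecidableEq n] {A : Matrix n n ℝ}
    (hA : A.PosSemidef) : Matrix n n ℝ :=
  hA.1.eigenvectorUnitary.1 * diagonal ((↑) ∘ (√·) ∘ hA.1.eigenvalues) *
    (star hA.1.eigenvectorUnitary : Matrix n n ℝ)

/-- the polar retraction R_X(v) = (X+v)(I + vᵀv)^{-1/2} -/
def polarRetract {n r : ℕ} (X v : Matrix (Fin n) (Fin r) ℝ) : Matrix (Fin n) (Fin r) ℝ :=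
  (X + v) * ((psd_one_add_sq v).sqrt)⁻¹

/-!
Tangency and `XᵀX = I` give `(X + v)ᵀ(X + v) = I + vᵀv = S²`, so `X + v = R S` with
`R = R_X(v)` on the Stiefel manifold and `S = (I + vᵀv)^{1/2} ⪰ I`. Writing `P = S - I ⪰ 0`,
`‖R S - Y‖² = ‖R - Y‖² + 2 (tr P - tr (P YᵀR)) + ‖P‖²`, and `tr (P YᵀR) ≤ tr P`: with
`P = BᵀB` this is `⟨Y Bᵀ, R Bᵀ⟩ ≤ (‖Y Bᵀ‖² + ‖R Bᵀ‖²) / 2 = tr P`, as `R` and `Y` are isometries.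
-/

open scoped MatrixOrder

namespace Matrix.PosSemidef

variable {n : Type*} [Fintype n] [DecidableEq n] {A : Matrix n n ℝ}

lemma sqrt_eq_cfc (hA : A.PosSemidef) : hA.sqrt = cfc Real.sqrt A := by
  rw [hA.1.cfc_eq]
  simp [IsHermitian.cfc, Matrix.PosSemidef.sqrt, Unitary.conjStarAlgAut_apply, Function.comp_def]

lemma sqrt_mul_self (hA : A.PosSemidef) : hA.sqrt * hA.sqrt = A := by
  rw [sqrt_eq_cfc, ← cfc_mul ..]
  conv_rhs => rw [← cfc_id ℝ A]
  exact cfc_congr fun x hx => Real.mul_self_sqrt (spectrum_nonneg_of_nonneg hA.nonneg hx)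

lemma one_le_sqrt (hA : A.PosSemidef) (h : 1 ≤ A) : 1 ≤ hA.sqrt := by
  rw [sqrt_eq_cfc, one_le_cfc_iff Real.sqrt A]
  exact fun x hx => Real.one_le_sqrt.mpr ((CFC.one_le_iff A).mp h x hx)

end Matrix.PosSemidef

namespace Matrix

variable {m n : Type*} [Fintype m] [Fintype n]

lemma trace_transpose_mul_self_nonneg (A : Matrix m n ℝ) : 0 ≤ trace (Aᵀ * A) := by
  simpa using (posSemidef_conjTranspose_mul_self A).trace_nonneg

lemma trace_add_transpose_mul_add {α : Type*} [CommRing α] (A B : Matrix m n α) :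
    trace ((A + B)ᵀ * (A + B)) = trace (Aᵀ * A) + 2 * trace (Aᵀ * B) + trace (Bᵀ * B) := by
  have hBA : trace (Bᵀ * A) = trace (Aᵀ * B) := by
    rw [← trace_transpose, transpose_mul, transpose_transpose]
  rw [transpose_add, Matrix.add_mul, Matrix.mul_add, Matrix.mul_add, trace_add, trace_add,
    trace_add, hBA]
  ring

lemma two_mul_trace_transpose_mul_le (A B : Matrix m n ℝ) :
    2 * trace (Aᵀ * B) ≤ trace (Aᵀ * A) + trace (Bᵀ * B) := by
  have h := trace_transpose_mul_self_nonneg (A + -B)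
  simp only [trace_add_transpose_mul_add, transpose_neg, Matrix.neg_mul, Matrix.mul_neg, neg_neg,
    trace_neg] at h
  linarith

lemma trace_mul_transpose_mul_le_trace [DecidableEq n] {R Y : Matrix m n ℝ} (hR : Rᵀ * R = 1)
    (hY : Yᵀ * Y = 1) {P : Matrix n n ℝ} (hP : P.PosSemidef) :
    trace (P * (Yᵀ * R)) ≤ trace P := by
  obtain ⟨B, rfl⟩ := CStarAlgebra.nonneg_iff_eq_star_mul_self.mp hP.nonneg
  rw [star_eq_conjTranspose, conjTranspose_eq_transpose_of_trivial]
  have hcross : trace (Bᵀ * B * (Yᵀ * R)) = trace ((Y * Bᵀ)ᵀ * (R * Bᵀ)) := by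
    rw [Matrix.mul_assoc, trace_mul_comm, transpose_mul, transpose_transpose]
    simp only [Matrix.mul_assoc]
  have hsq {Z : Matrix m n ℝ} (hZ : Zᵀ * Z = 1) :
      trace ((Z * Bᵀ)ᵀ * (Z * Bᵀ)) = trace (Bᵀ * B) := by
    rw [transpose_mul, transpose_transpose, Matrix.mul_assoc, ← Matrix.mul_assoc Zᵀ, hZ,
      Matrix.one_mul, trace_mul_comm]
  have := two_mul_trace_transpose_mul_le (Y * Bᵀ) (R * Bᵀ)
  rw [hsq hY, hsq hR] at this
  linarith

lemma trace_sq_sub_le_trace_sq_mul_sub [DecidableEq n] {R Y : Matrix m n ℝ} (hR : Rᵀ * R = 1)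
    (hY : Yᵀ * Y = 1) {S : Matrix n n ℝ} (hS : 1 ≤ S) :
    trace ((R - Y)ᵀ * (R - Y)) ≤ trace ((R * S - Y)ᵀ * (R * S - Y)) := by
  set P := S - 1
  have hP : P.PosSemidef := hS
  have hPP : trace ((R * P)ᵀ * (R * P)) = trace (Pᵀ * P) := by
    rw [transpose_mul, Matrix.mul_assoc, ← Matrix.mul_assoc Rᵀ, hR, Matrix.one_mul]
  have hcross : trace ((R - Y)ᵀ * (R * P)) = trace P - trace (P * (Yᵀ * R)) := by
    rw [transpose_sub, Matrix.sub_mul, ← Matrix.mul_assoc, ← Matrix.mul_assoc, hR,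
      Matrix.one_mul, trace_sub, trace_mul_comm _ P]
  have hsplit : R * S - Y = (R - Y) + R * P := by
    simp only [P, Matrix.mul_sub, Matrix.mul_one]; abel
  rw [hsplit, trace_add_transpose_mul_add, hcross, hPP]
  linarith [trace_mul_transpose_mul_le_trace hR hY hP, trace_transpose_mul_self_nonneg P]

lemma transpose_mul_self_mul_inv [DecidableEq n] {A : Matrix m n ℝ} {S : Matrix n n ℝ}
    (hS : S.PosDef) (hA : Aᵀ * A = S * S) : (A * S⁻¹)ᵀ * (A * S⁻¹) = 1 := by
  have hdet : IsUnit S.det := (isUnit_iff_isUnit_det S).mp hS.isUnit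
  have hSt : Sᵀ = S := by simpa using hS.1.eq
  rw [transpose_mul, transpose_nonsing_inv, hSt, Matrix.mul_assoc, ← Matrix.mul_assoc Aᵀ, hA,
    ← Matrix.mul_assoc, ← Matrix.mul_assoc, nonsing_inv_mul S hdet, Matrix.one_mul,
    mul_nonsing_inv S hdet]

lemma add_transpose_mul_self_add_of_tangent {m n : Type*} [Fintype m] [DecidableEq n]
    {X v : Matrix m n ℝ} (hX : Xᵀ * X = 1) (hv : Xᵀ * v + vᵀ * X = 0) :
    (X + v)ᵀ * (X + v) = 1 + vᵀ * v := by
  rw [transpose_add, Matrix.add_mul, Matrix.mul_add, Matrix.mul_add, hX, add_assoc,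
    ← add_assoc (Xᵀ * v), hv, zero_add]

end Matrix

lemma frob_sq_eq_trace {n r : ℕ} (A : Matrix (Fin n) (Fin r) ℝ) :
    frob A ^ 2 = trace (Aᵀ * A) := by
  rw [frob, Real.sq_sqrt (by positivity), trace, Finset.sum_comm]
  simp [mul_apply, sq]

/-- non-expansiveness of the polar retraction:
for `X, Y ∈ St(n,r)` and `v ∈ T_X`, `‖R_X(v) − Y‖_F² ≤ ‖X + v − Y‖_F²`. -/
theorem polarRetract_nonexpansive {n r : ℕ}
    (X Y v : Matrix (Fin n) (Fin r) ℝ)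
    (hX : X ∈ Stiefel n r) (hY : Y ∈ Stiefel n r) (hv : v ∈ Tang X) :
    frob (polarRetract X v - Y) ^ 2 ≤ frob (X + v - Y) ^ 2 := by
  set S := (psd_one_add_sq v).sqrt
  have hS : 1 ≤ S := (psd_one_add_sq v).one_le_sqrt <|
    le_add_of_nonneg_right (by simpa using (posSemidef_conjTranspose_mul_self v).nonneg)
  have hSpos : S.PosDef := by simpa using PosDef.one.add_posSemidef hS
  have hR : (polarRetract X v)ᵀ * polarRetract X v = 1 :=
    transpose_mul_self_mul_inv hSpos <| by
      rw [add_transpose_mul_self_add_of_tangent hX hv, (psd_one_add_sq v).sqrt_mul_self]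
  have hRS : polarRetract X v * S = X + v :=
    nonsing_inv_mul_cancel_right _ _ ((isUnit_iff_isUnit_det S).mp hSpos.isUnit)
  rw [frob_sq_eq_trace, frob_sq_eq_trace, ← hRS]
  exact trace_sq_sub_le_trace_sq_mul_sub hR hY hS

end
end

section
/- Let X̄, Ȳ ∈ ℝ^{n×r} have full column rank, with smallest singular values σ_r(X̄) and σ_r(Ȳ), and let X̂ := X̄(X̄ᵀX̄)^{-1/2} and Ŷ := Ȳ(ȲᵀȲ)^{-1/2} be their polar (orthogonal) factors. Then ‖Ŷ − X̂‖_F ≤ (2/(σ_r(X̄) + σ_r(Ȳ))) ‖Ȳ − X̄‖_F. -/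
/-!
Write `X = X̂ H_X` and `Y = Ŷ H_Y` with `H = (AᵀA)^{1/2}`, and put `T = Ŷ - X̂`. Then
`2 (Y - X) = T (H_X + H_Y) + (Ŷ + X̂)(H_Y - H_X)`. Pairing with `T` in the trace inner
product, the second term drops out because `Tᵀ(Ŷ + X̂) = ŶᵀX̂ - X̂ᵀŶ` is skew while
`H_Y - H_X` is symmetric, and `H_X + H_Y ≥ (σ_r(X) + σ_r(Y)) I` bounds the first from below.
Hence `(σ_r(X) + σ_r(Y)) ‖T‖² ≤ 2 ⟨T, Y - X⟩ ≤ 2 ‖T‖ ‖Y - X‖`.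
-/

open Matrix
open scoped BigOperators

noncomputable section

lemma psd_AtA {n r : ℕ} (A : Matrix (Fin n) (Fin r) ℝ) : (Aᵀ * A).PosSemidef := by
  simpa using Matrix.posSemidef_conjTranspose_mul_self A

/-- the positive semidefinite square root, as `Matrix.PosSemidef.sqrt` was defined in the older Mathlib -/
def posSemidefSqrt {m : ℕ} {M : Matrix (Fin m) (Fin m) ℝ} (hM : M.PosSemidef) :
    Matrix (Fin m) (Fin m) ℝ :=
  hM.1.eigenvectorUnitary.1 * diagonal ((↑) ∘ (Real.sqrt ∘ hM.1.eigenvalues)) *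
  (star hM.1.eigenvectorUnitary : Matrix (Fin m) (Fin m) ℝ)

/-- the polar factor A(AᵀA)^{-1/2} -/
def polarFactor {n r : ℕ} (A : Matrix (Fin n) (Fin r) ℝ) : Matrix (Fin n) (Fin r) ℝ :=
  A * (posSemidefSqrt (psd_AtA A))⁻¹

/-- the smallest singular value of a matrix -/
def sigmaMin {n r : ℕ} (A : Matrix (Fin n) (Fin r) ℝ) : ℝ :=
  sInf {c | ∃ x : EuclideanSpace ℝ (Fin r), ‖x‖ = 1 ∧ c = ‖Matrix.toEuclideanLin A x‖}

section Rank

variable {m k K : Type*} [Fintype k] [Field K]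

theorem Matrix.ker_mulVecLin_eq_bot_of_rank_eq (A : Matrix m k K)
    (hA : A.rank = Fintype.card k) : LinearMap.ker A.mulVecLin = ⊥ := by
  have := LinearMap.finrank_range_add_finrank_ker A.mulVecLin
  rw [← Matrix.rank, hA, Module.finrank_fintype_fun_eq_card] at this
  exact Submodule.finrank_eq_zero.mp (by omega)

theorem Matrix.isUnit_transpose_mul_self_of_rank_eq [Fintype m] [DecidableEq k] [LinearOrder K]
    [IsStrictOrderedRing K] (A : Matrix m k K) (hA : A.rank = Fintype.card k) :
    IsUnit (Aᵀ * A) := by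
  rw [← mulVec_injective_iff_isUnit, ← coe_mulVecLin, ← LinearMap.ker_eq_bot,
    ker_mulVecLin_transpose_mul_self]
  exact A.ker_mulVecLin_eq_bot_of_rank_eq hA

end Rank

theorem Matrix.IsHermitian.eq_eigenvectorUnitary_mul_diagonal_mul_star {ι : Type*} [Fintype ι]
    [DecidableEq ι] {M : Matrix ι ι ℝ} (hM : M.IsHermitian) :
    M = (hM.eigenvectorUnitary : Matrix ι ι ℝ) * diagonal hM.eigenvalues *
      (star hM.eigenvectorUnitary : Matrix ι ι ℝ) := by
  conv_lhs => rw [hM.spectral_theorem]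
  simp [Unitary.conjStarAlgAut_apply]

section Sqrt

variable {m : ℕ} {M : Matrix (Fin m) (Fin m) ℝ} (hM : M.PosSemidef)

theorem posSemidefSqrt_mul_self : posSemidefSqrt hM * posSemidefSqrt hM = M := by
  have hsq : diagonal ((↑) ∘ (Real.sqrt ∘ hM.1.eigenvalues)) *
      diagonal ((↑) ∘ (Real.sqrt ∘ hM.1.eigenvalues)) = diagonal hM.1.eigenvalues := by
    simp [diagonal_mul_diagonal, Real.mul_self_sqrt (hM.eigenvalues_nonneg _)]
  conv_rhs => rw [hM.1.eq_eigenvectorUnitary_mul_diagonal_mul_star, ← hsq]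
  have hU : (star hM.1.eigenvectorUnitary : Matrix (Fin m) (Fin m) ℝ) *
      (hM.1.eigenvectorUnitary : Matrix (Fin m) (Fin m) ℝ) = 1 := by simp
  simp only [posSemidefSqrt, Matrix.mul_assoc]
  rw [← Matrix.mul_assoc (star _ : Matrix _ _ ℝ), hU, Matrix.one_mul]

theorem posSemidef_posSemidefSqrt_sub_smul_one {c : ℝ}
    (hc : ∀ i, c ≤ Real.sqrt (hM.1.eigenvalues i)) :
    (posSemidefSqrt hM - c • 1).PosSemidef := by
  set U : Matrix (Fin m) (Fin m) ℝ := (hM.1.eigenvectorUnitary : Matrix (Fin m) (Fin m) ℝ)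
  have hU : U * star U = 1 := Matrix.mem_unitaryGroup_iff.mp hM.1.eigenvectorUnitary.2
  have hD : (diagonal fun i => Real.sqrt (hM.1.eigenvalues i) - c).PosSemidef :=
    PosSemidef.diagonal fun i => sub_nonneg.mpr (hc i)
  convert hD.mul_mul_conjTranspose_same U using 1
  rw [← star_eq_conjTranspose, ← diagonal_sub, ← smul_one_eq_diagonal, Matrix.mul_sub,
    Matrix.sub_mul, Matrix.mul_smul, Matrix.smul_mul, Matrix.mul_one, hU]
  rfl

theorem transpose_posSemidefSqrt : (posSemidefSqrt hM)ᵀ = posSemidefSqrt hM := by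
  have := (posSemidef_posSemidefSqrt_sub_smul_one hM (c := 0) fun _ => Real.sqrt_nonneg _).1
  simpa using this.eq

end Sqrt

section Polar

variable {n r : ℕ} {A : Matrix (Fin n) (Fin r) ℝ}

theorem isUnit_posSemidefSqrt_transpose_mul_self (hA : A.rank = r) :
    IsUnit (posSemidefSqrt (psd_AtA A)) := by
  have hAtA := A.isUnit_transpose_mul_self_of_rank_eq (by rwa [Fintype.card_fin])
  rw [← posSemidefSqrt_mul_self (psd_AtA A)] at hAtA
  exact isUnit_of_mul_isUnit_left hAtA

theorem polarFactor_mul_posSemidefSqrt (hA : A.rank = r) :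
    polarFactor A * posSemidefSqrt (psd_AtA A) = A := by
  rw [polarFactor, Matrix.mul_assoc, nonsing_inv_mul _
    ((isUnit_iff_isUnit_det _).mp (isUnit_posSemidefSqrt_transpose_mul_self hA)), Matrix.mul_one]

theorem transpose_polarFactor_mul_self (hA : A.rank = r) :
    (polarFactor A)ᵀ * polarFactor A = 1 := by
  set H := posSemidefSqrt (psd_AtA A)
  have hH := (isUnit_iff_isUnit_det _).mp (isUnit_posSemidefSqrt_transpose_mul_self hA)
  calc (polarFactor A)ᵀ * polarFactor A = H⁻¹ * (H * H) * H⁻¹ := by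
        rw [polarFactor, transpose_mul, transpose_nonsing_inv, transpose_posSemidefSqrt,
          posSemidefSqrt_mul_self]
        simp only [H, Matrix.mul_assoc]
    _ = 1 := by
        rw [← Matrix.mul_assoc, nonsing_inv_mul _ hH, Matrix.one_mul, mul_nonsing_inv _ hH]

end Polar

section SigmaMin

variable {n r : ℕ} (A : Matrix (Fin n) (Fin r) ℝ)

theorem sigmaMin_le_norm {x : EuclideanSpace ℝ (Fin r)} (hx : ‖x‖ = 1) :
    sigmaMin A ≤ ‖Matrix.toEuclideanLin A x‖ :=
  csInf_le ⟨0, fun _ ⟨_, _, hc⟩ => hc ▸ norm_nonneg _⟩ ⟨x, hx, rfl⟩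

theorem sigmaMin_le_sqrt_eigenvalues (i : Fin r) :
    sigmaMin A ≤ Real.sqrt ((psd_AtA A).1.eigenvalues i) := by
  set v := (psd_AtA A).1.eigenvectorBasis i
  have hv : ‖v‖ = 1 := (psd_AtA A).1.eigenvectorBasis.orthonormal.1 i
  have hev : (psd_AtA A).1.eigenvalues i = ‖Matrix.toEuclideanLin A v‖ ^ 2 := by
    rw [(psd_AtA A).1.eigenvalues_eq, ← real_inner_self_eq_norm_sq,
      EuclideanSpace.inner_eq_star_dotProduct]
    simp [v, ← mulVec_mulVec, dotProduct_mulVec, vecMul_transpose, dotProduct_comm]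
  rw [hev, Real.sqrt_sq (norm_nonneg _)]
  exact sigmaMin_le_norm A hv

theorem sigmaMin_pos (hA : A.rank = r) (hr : 0 < r) : 0 < sigmaMin A := by
  have hker := A.ker_mulVecLin_eq_bot_of_rank_eq (by rwa [Fintype.card_fin])
  have hinj : LinearMap.ker (Matrix.toEuclideanLin A) = ⊥ := by
    rw [LinearMap.ker_eq_bot] at hker ⊢
    intro x y hxy
    exact WithLp.ofLp_injective 2 (hker (by simpa using congrArg WithLp.ofLp hxy))
  obtain ⟨K, hK, hanti⟩ := (Matrix.toEuclideanLin A).exists_antilipschitzWith hinj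
  refine lt_of_lt_of_le (inv_pos.mpr (NNReal.coe_pos.mpr hK))
    (le_csInf ⟨_, EuclideanSpace.single ⟨0, hr⟩ 1, by simp, rfl⟩ ?_)
  rintro _ ⟨y, hy, rfl⟩
  have := ZeroHomClass.bound_of_antilipschitz (Matrix.toEuclideanLin A) hanti y
  rw [hy] at this
  rwa [inv_le_iff_one_le_mul₀' (NNReal.coe_pos.mpr hK)]

end SigmaMin


theorem Matrix.transpose_eq_of_posSemidef_sub_smul_one {k : Type*} [DecidableEq k]
    {S : Matrix k k ℝ} {c : ℝ} (hS : (S - c • 1).PosSemidef) : Sᵀ = S := by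
  simpa [transpose_sub] using hS.1.eq

section Trace

variable {m k : Type*} [Fintype m] [Fintype k]

theorem Matrix.trace_transpose_mul_eq_sum (U V : Matrix m k ℝ) :
    trace (Uᵀ * V) = ∑ i, ∑ j, U i j * V i j := by
  simp only [trace, diag, mul_apply, transpose_apply]
  exact Finset.sum_comm

theorem Matrix.trace_mul_eq_zero_of_transpose_eq_neg {M S : Matrix k k ℝ} (hM : Mᵀ = -M)
    (hS : Sᵀ = S) : trace (M * S) = 0 := by
  have h : trace (M * S) = -trace (M * S) := by
    conv_lhs => rw [← trace_transpose, transpose_mul, hS, hM, Matrix.mul_neg, trace_neg,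
      trace_mul_comm]
  linarith

theorem Matrix.trace_transpose_mul_self_mul_nonneg (T : Matrix m k ℝ) {S : Matrix k k ℝ}
    (hS : S.PosSemidef) : 0 ≤ trace (Tᵀ * T * S) := by
  rw [Matrix.mul_assoc, trace_mul_comm]
  simpa using (hS.mul_mul_conjTranspose_same T).trace_nonneg

variable [DecidableEq k]

theorem Matrix.add_mul_trace_le_two_mul_trace {P Q : Matrix m k ℝ} {H K : Matrix k k ℝ}
    {a b : ℝ} (hP : Pᵀ * P = 1) (hQ : Qᵀ * Q = 1) (hH : (H - a • 1).PosSemidef)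
    (hK : (K - b • 1).PosSemidef) :
    (a + b) * trace ((Q - P)ᵀ * (Q - P)) ≤ 2 * trace ((Q - P)ᵀ * (Q * K - P * H)) := by
  set T := Q - P
  have hsplit : (2 : ℝ) • (Q * K - P * H) = T * (H + K) + (Q + P) * (K - H) := by
    simp only [T, two_smul, Matrix.sub_mul, Matrix.add_mul, Matrix.mul_add, Matrix.mul_sub]
    abel
  have hskew : (Tᵀ * (Q + P))ᵀ = -(Tᵀ * (Q + P)) := by
    have : Tᵀ * (Q + P) = Qᵀ * P - Pᵀ * Q := by
      simp only [T, transpose_sub, Matrix.sub_mul, Matrix.mul_add, hP, hQ]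
      abel
    rw [this, transpose_sub, transpose_mul, transpose_mul, transpose_transpose,
      transpose_transpose, neg_sub]
  have hsym : (K - H)ᵀ = K - H := by
    rw [transpose_sub, transpose_eq_of_posSemidef_sub_smul_one hK,
      transpose_eq_of_posSemidef_sub_smul_one hH]
  have hcross : trace (Tᵀ * ((Q + P) * (K - H))) = 0 := by
    rw [← Matrix.mul_assoc]
    exact trace_mul_eq_zero_of_transpose_eq_neg hskew hsym
  have hpsd : 0 ≤ trace (Tᵀ * T * (H + K - (a + b) • 1)) := by
    refine T.trace_transpose_mul_self_mul_nonneg ?_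
    convert hH.add hK using 1
    rw [add_smul]
    abel
  rw [Matrix.mul_sub, trace_sub, Matrix.mul_smul, Matrix.mul_one, trace_smul,
    smul_eq_mul] at hpsd
  calc (a + b) * trace (Tᵀ * T) ≤ trace (Tᵀ * T * (H + K)) := by linarith
    _ = trace (Tᵀ * (T * (H + K) + (Q + P) * (K - H))) := by
        rw [Matrix.mul_add Tᵀ, trace_add, hcross, add_zero, Matrix.mul_assoc]
    _ = 2 * trace (Tᵀ * (Q * K - P * H)) := by
        rw [← hsplit, Matrix.mul_smul, trace_smul, smul_eq_mul]

end Trace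

section Frobenius

variable {n r : ℕ}

theorem frob_nonneg (A : Matrix (Fin n) (Fin r) ℝ) : 0 ≤ frob A :=
  Real.sqrt_nonneg _

theorem frob_sq (A : Matrix (Fin n) (Fin r) ℝ) : frob A ^ 2 = trace (Aᵀ * A) := by
  rw [frob, Real.sq_sqrt (by positivity), trace_transpose_mul_eq_sum]
  simp only [sq]

theorem trace_transpose_mul_le_frob_mul_frob (U V : Matrix (Fin n) (Fin r) ℝ) :
    trace (Uᵀ * V) ≤ frob U * frob V := by
  simp only [trace_transpose_mul_eq_sum, frob, ← Fintype.sum_prod_type']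
  exact Real.sum_mul_le_sqrt_mul_sqrt _ _ _

theorem add_mul_frob_sub_le {P Q : Matrix (Fin n) (Fin r) ℝ} {H K : Matrix (Fin r) (Fin r) ℝ}
    {a b : ℝ} (hP : Pᵀ * P = 1) (hQ : Qᵀ * Q = 1) (hH : (H - a • 1).PosSemidef)
    (hK : (K - b • 1).PosSemidef) :
    (a + b) * frob (Q - P) ≤ 2 * frob (Q * K - P * H) := by
  have key := add_mul_trace_le_two_mul_trace hP hQ hH hK
  rw [← frob_sq] at key
  have hCS := trace_transpose_mul_le_frob_mul_frob (Q - P) (Q * K - P * H)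
  rcases (frob_nonneg (Q - P)).eq_or_lt with h0 | hpos
  · rw [← h0, mul_zero]
    exact mul_nonneg zero_le_two (frob_nonneg _)
  · refine le_of_mul_le_mul_right ?_ hpos
    nlinarith

end Frobenius

/-- perturbation bound for polar factors: for full column rank `X̄, Ȳ`,
`‖Ŷ − X̂‖_F ≤ (2/(σ_r(X̄) + σ_r(Ȳ))) ‖Ȳ − X̄‖_F`. -/
theorem polarFactor_perturbation {n r : ℕ}
    (Xbar Ybar : Matrix (Fin n) (Fin r) ℝ)
    (hX : Xbar.rank = r) (hY : Ybar.rank = r) :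
    frob (polarFactor Ybar - polarFactor Xbar) ≤
      2 / (sigmaMin Xbar + sigmaMin Ybar) * frob (Ybar - Xbar) := by
  rcases Nat.eq_zero_or_pos r with rfl | hr
  · simp [frob]
  have hc : 0 < sigmaMin Xbar + sigmaMin Ybar :=
    add_pos (sigmaMin_pos Xbar hX hr) (sigmaMin_pos Ybar hY hr)
  have key := add_mul_frob_sub_le (transpose_polarFactor_mul_self hX)
    (transpose_polarFactor_mul_self hY)
    (posSemidef_posSemidefSqrt_sub_smul_one (psd_AtA Xbar) (sigmaMin_le_sqrt_eigenvalues Xbar))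
    (posSemidef_posSemidefSqrt_sub_smul_one (psd_AtA Ybar) (sigmaMin_le_sqrt_eigenvalues Ybar))
  rw [polarFactor_mul_posSemidefSqrt hX, polarFactor_mul_posSemidefSqrt hY] at key
  rw [div_mul_eq_mul_div, le_div_iff₀ hc]
  linarith

end
end
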